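/- arXiv:2210.00197 — 4 statements merged into one kernel-verified Lean document; each statement's English description precedes it below -/
import Mathlib

section
/- Suppose 𝓕 is a nonempty collection of subsets of a set X such that the union of every subfamily of 𝓕 that is totally ordered by inclusion belongs to 𝓕. Suppose g is a function that associates to each D ∈ 𝓕 a set g(D) ∈ 𝓕 such that D ⊆ g(D) and g(D) \ D has at most one element. Then there exists D ∈ 𝓕 for which g(D) = D. -/
theorem exists_fixed_point_of_subchain_closed_general {X : Type*} (F : Set (Set X))
    (hchain : ∀ c ⊆ F, IsChain (· ⊆ ·) c → ⋃₀ c ∈ F)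
    (g : Set X → Set X)
    (hgF : ∀ D ∈ F, g D ∈ F)
    (hsub : ∀ D ∈ F, D ⊆ g D) :
    ∃ D ∈ F, g D = D := by
  obtain ⟨m, hm⟩ := zorn_subset F fun c hcF hc =>
    ⟨⋃₀ c, hchain c hcF hc, fun _ => Set.subset_sUnion_of_mem⟩
  exact ⟨m, hm.prop, hm.eq_of_ge (hgF m hm.prop) (hsub m hm.prop)⟩

/-- If `𝓕` is a nonempty family of subsets of `X` closed under unions of subchains, and
`g : 𝓕 → 𝓕` satisfies `D ⊆ g D` with `g D \ D` having at most one element, then `g` has a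
fixed point in `𝓕`. -/
theorem exists_fixed_point_of_subchain_closed {X : Type*} (F : Set (Set X))
    (hne : F.Nonempty)
    (hchain : ∀ c ⊆ F, IsChain (· ⊆ ·) c → ⋃₀ c ∈ F)
    (g : Set X → Set X)
    (hgF : ∀ D ∈ F, g D ∈ F)
    (hsub : ∀ D ∈ F, D ⊆ g D)
    (hone : ∀ D ∈ F, (g D \ D).Subsingleton) :
    ∃ D ∈ F, g D = D :=
  exists_fixed_point_of_subchain_closed_general F hchain g hgF hsub
end

section
/- Let R be a binary relation on a set X, let Y ⊆ X be a nonempty top R-cycle, and let y ∈ Y. Then y is maximal with respect to the asymmetric part of the transitive closure of R; that is, for every z ∈ X, if (z, y) ∈ R̄ then (y, z) ∈ R̄. -/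
/-- `Y` is an `R`-cycle: any two elements are related both ways by the transitive closure of `R`. -/
def RCycle {X : Type*} (R : X → X → Prop) (Y : Set X) : Prop :=
  ∀ x ∈ Y, ∀ y ∈ Y, Relation.TransGen R x y ∧ Relation.TransGen R y x

/-- `Y` is a top `R`-cycle: an `R`-cycle such that no element outside `Y` is `R`-related
to an element of `Y`. -/
def TopRCycle {X : Type*} (R : X → X → Prop) (Y : Set X) : Prop :=
  RCycle R Y ∧ ∀ y ∉ Y, ∀ x ∈ Y, ¬ R y x

theorem Relation.TransGen.mem_of_closed_under_pred {X : Type*} {R : X → X → Prop} {Y : Set X}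
    (hY : ∀ a ∉ Y, ∀ b ∈ Y, ¬ R a b) {a b : X} (hab : Relation.TransGen R a b) (hb : b ∈ Y) :
    a ∈ Y := by
  induction hab using Relation.TransGen.head_induction_on with
  | single h => exact by_contra fun ha => hY _ ha b hb h
  | head h _ ih => exact by_contra fun ha => hY _ ha _ ih h

theorem TopRCycle.mem_of_transGen {X : Type*} {R : X → X → Prop} {Y : Set X}
    (htop : TopRCycle R Y) {z y : X} (hzy : Relation.TransGen R z y) (hy : y ∈ Y) : z ∈ Y :=
  hzy.mem_of_closed_under_pred htop.2 hy

theorem topRCycle_mem_maximal_general {X : Type*} (R : X → X → Prop) (Y : Set X)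
    (htop : TopRCycle R Y) (y : X) (hy : y ∈ Y) :
    ∀ z : X, Relation.TransGen R z y → Relation.TransGen R y z :=
  fun z hzy => (htop.1 y hy z (htop.mem_of_transGen hzy hy)).1

/-- Every element of a nonempty top `R`-cycle is maximal with respect to the asymmetric
part of the transitive closure of `R`. -/
theorem topRCycle_mem_maximal {X : Type*} (R : X → X → Prop) (Y : Set X)
    (hne : Y.Nonempty) (htop : TopRCycle R Y) (y : X) (hy : y ∈ Y) :
    ∀ z : X, Relation.TransGen R z y → Relation.TransGen R y z :=
  topRCycle_mem_maximal_general R Y htop y hy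
end

section
/- Let R be a binary relation on a set X and let x* ∈ X be maximal with respect to the asymmetric part of the transitive closure R̄ of R (i.e., for every z ∈ X, if (z, x*) ∈ R̄ then (x*, z) ∈ R̄). Suppose there exists ỹ ∈ X with (ỹ, x*) ∈ R. Then the set A = { y ∈ X | (x*, y) ∈ R̄ and (y, x*) ∈ R̄ } is a nonempty top R-cycle. -/
/-!
The points related both ways to `x*` form an `R`-cycle by transitivity of `R̄`. If `y R x` with
`x` in this class, then `y R̄ x*`, so maximality of `x*` gives `x* R̄ y` and `y` lies in the class
as well. Maximality applied to `ỹ R x*` puts `ỹ` in the class.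
-/

namespace Relation

variable {X : Type*} {R : X → X → Prop} {x : X}

def cycleClass (R : X → X → Prop) (x : X) : Set X :=
  {y | TransGen R x y ∧ TransGen R y x}

theorem rCycle_cycleClass : RCycle R (cycleClass R x) :=
  fun _ ⟨hxy, hyx⟩ _ ⟨hxz, hzx⟩ => ⟨hyx.trans hxz, hzx.trans hxy⟩

theorem mem_cycleClass_of_transGen (hmax : ∀ z, TransGen R z x → TransGen R x z) {y : X}
    (hyx : TransGen R y x) : y ∈ cycleClass R x :=
  ⟨hmax y hyx, hyx⟩

theorem topRCycle_cycleClass (hmax : ∀ z, TransGen R z x → TransGen R x z) :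
    TopRCycle R (cycleClass R x) :=
  ⟨rCycle_cycleClass, fun _ hy _ hz hyz =>
    hy <| mem_cycleClass_of_transGen hmax ((TransGen.single hyz).trans hz.2)⟩

theorem cycleClass_nonempty_of_rel (hmax : ∀ z, TransGen R z x → TransGen R x z) {y : X}
    (hyx : R y x) : (cycleClass R x).Nonempty :=
  ⟨y, mem_cycleClass_of_transGen hmax (TransGen.single hyx)⟩

end Relation

/-- If `x*` is maximal with respect to the asymmetric part of the transitive closure of `R`
and some `ỹ` satisfies `(ỹ, x*) ∈ R`, then the set of points related both ways to `x*`
by the transitive closure is a nonempty top `R`-cycle. -/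
theorem cycleClass_topRCycle {X : Type*} (R : X → X → Prop) (xstar : X)
    (hmax : ∀ z : X, Relation.TransGen R z xstar → Relation.TransGen R xstar z)
    (hdom : ∃ ytilde : X, R ytilde xstar) :
    ({y : X | Relation.TransGen R xstar y ∧ Relation.TransGen R y xstar}).Nonempty ∧
      TopRCycle R {y : X | Relation.TransGen R xstar y ∧ Relation.TransGen R y xstar} := by
  obtain ⟨ytilde, hytilde⟩ := hdom
  exact ⟨Relation.cycleClass_nonempty_of_rel hmax hytilde, Relation.topRCycle_cycleClass hmax⟩
end

section
/- Let R be a binary relation on a set X and let D be a minimal R-undominated subset of X containing at least two elements. Then for all x, y ∈ D, (x, y) ∈ R̄; in particular, D is a top R-cycle. -/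
/-- `Y` is `R`-undominated: no element outside `Y` is `R`-related to an element of `Y`. -/
def RUndominated {X : Type*} (R : X → X → Prop) (Y : Set X) : Prop :=
  ∀ x ∈ Y, ∀ y ∉ Y, ¬ R y x

/-- `Y` is a minimal `R`-undominated set: nonempty, `R`-undominated, and no nonempty
proper subset of it is `R`-undominated. -/
def MinRUndominated {X : Type*} (R : X → X → Prop) (Y : Set X) : Prop :=
  Y.Nonempty ∧ RUndominated R Y ∧ ∀ Z : Set X, Z.Nonempty → Z ⊂ Y → ¬ RUndominated R Z

/-! The `R`-ancestors of any `y ∈ D` form a nonempty undominated subset of `D`, so by minimality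
every element of `D` reaches `y` in zero or more steps. A path of positive length from `x` to `y`
is obtained by first going to an element of `D` other than `x`. -/

open Relation

section

variable {X : Type*} {R : X → X → Prop} {D : Set X}

theorem rUndominated_setOf_reflTransGen (R : X → X → Prop) (y : X) :
    RUndominated R {z | ReflTransGen R z y} :=
  fun _ hz _ hw hR => hw (ReflTransGen.head hR hz)

theorem RUndominated.setOf_reflTransGen_subset (hD : RUndominated R D) {y : X} (hy : y ∈ D) :
    {z | ReflTransGen R z y} ⊆ D := by
  intro z hz
  induction hz using ReflTransGen.head_induction_on with
  | refl => exact hy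
  | head hR _ ih => exact of_not_not fun hw => hD _ ih _ hw hR

theorem MinRUndominated.eq_of_subset (hmin : MinRUndominated R D) {Z : Set X}
    (hZ : Z.Nonempty) (hZD : Z ⊆ D) (hund : RUndominated R Z) : Z = D :=
  of_not_not fun hne => hmin.2.2 Z hZ (hZD.ssubset_of_ne hne) hund

theorem MinRUndominated.reflTransGen (hmin : MinRUndominated R D) {x y : X} (hx : x ∈ D)
    (hy : y ∈ D) : ReflTransGen R x y := by
  have hA : {z | ReflTransGen R z y} = D :=
    hmin.eq_of_subset ⟨y, ReflTransGen.refl⟩ (hmin.2.1.setOf_reflTransGen_subset hy)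
      (rUndominated_setOf_reflTransGen R y)
  exact hA.ge hx

theorem MinRUndominated.transGen (hmin : MinRUndominated R D) (hD : D.Nontrivial) {x y : X}
    (hx : x ∈ D) (hy : y ∈ D) : TransGen R x y := by
  obtain ⟨b, hb, hbx⟩ := hD.exists_ne x
  have hxb : TransGen R x b :=
    (reflTransGen_iff_eq_or_transGen.mp (hmin.reflTransGen hx hb)).resolve_left hbx
  exact hxb.trans_left (hmin.reflTransGen hb hy)

theorem RUndominated.topRCycle (hD : RUndominated R D)
    (hpath : ∀ x ∈ D, ∀ y ∈ D, TransGen R x y) : TopRCycle R D :=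
  ⟨fun x hx y hy => ⟨hpath x hx y hy, hpath y hy x hx⟩, fun y hy x hx => hD x hx y hy⟩

end

/-- A minimal `R`-undominated set with at least two elements has any two of its elements
related by the transitive closure of `R`; in particular it is a top `R`-cycle. -/
theorem minRUndominated_topRCycle {X : Type*} (R : X → X → Prop) (D : Set X)
    (hmin : MinRUndominated R D) (htwo : ∃ a ∈ D, ∃ b ∈ D, a ≠ b) :
    (∀ x ∈ D, ∀ y ∈ D, Relation.TransGen R x y) ∧ TopRCycle R D := by
  have hpath : ∀ x ∈ D, ∀ y ∈ D, TransGen R x y := fun x hx y hy =>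
    hmin.transGen htwo hx hy
  exact ⟨hpath, hmin.2.1.topRCycle hpath⟩
end
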